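/- Let A be an admissible set of addition chains and let n, m be positive integers. If δ^A(n) = δ^A(m) and n is A-stable, then m is A-stable. -/

import Mathlib

/-- `c` is an addition chain: a nonempty list of positive integers starting at `1`
such that every later entry is the sum of two (not necessarily distinct) earlier entries. -/
def IsAdditionChain (c : List ℕ) : Prop :=
  c.getD 0 0 = 1 ∧
    ∀ k, 0 < k → k < c.length →
      ∃ i j, i < k ∧ j < k ∧ c.getD k 0 = c.getD i 0 + c.getD j 0

/-- `c` is an addition chain whose last entry is `n`; its length is `c.length - 1`. -/
def IsAdditionChainFor (c : List ℕ) (n : ℕ) : Prop :=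
  IsAdditionChain c ∧ c.getD (c.length - 1) 0 = n

/-- ν₂(n): the number of 1's in the binary expansion of `n`. -/
def binaryWeight (n : ℕ) : ℕ := (Nat.digits 2 n).sum

/-- `ℓ^A(n)`: the least length (number of steps, i.e. one less than the number of
entries) of an addition chain for `n` belonging to the set `A` of addition chains. -/
noncomputable def chainLength (A : Set (List ℕ)) (n : ℕ) : ℕ :=
  sInf {r | ∃ c ∈ A, IsAdditionChainFor c n ∧ c.length = r + 1}

/-- A set `A` of addition chains is admissible if (i) every positive `n` has a chain
in `A` of length at most `⌊log₂ n⌋ + ν₂(n) - 1` (i.e. with at most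
`⌊log₂ n⌋ + ν₂(n)` entries) and (ii) `ℓ^A(2n) ≤ ℓ^A(n) + 1` for all positive `n`. -/
def Admissible (A : Set (List ℕ)) : Prop :=
  (∀ n : ℕ, 0 < n → ∃ c ∈ A, IsAdditionChainFor c n ∧
      c.length ≤ Nat.log 2 n + binaryWeight n) ∧
  ∀ n : ℕ, 0 < n → chainLength A (2 * n) ≤ chainLength A n + 1

/-- The A-defect `δ^A(n) = ℓ^A(n) - log₂ n`. -/
noncomputable def Adefect (A : Set (List ℕ)) (n : ℕ) : ℝ :=
  (chainLength A n : ℝ) - Real.logb 2 n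

/-- `m` is A-stable if `ℓ^A(2^k m) = ℓ^A(m) + k` for all `k ≥ 0`. -/
def AStable (A : Set (List ℕ)) (m : ℕ) : Prop :=
  ∀ k : ℕ, chainLength A (2 ^ k * m) = chainLength A m + k

/-- `𝒟^A`: the set of all A-defect values. -/
def defectSet (A : Set (List ℕ)) : Set ℝ :=
  {d | ∃ n : ℕ, 0 < n ∧ d = Adefect A n}

/-- `𝒟^A_st`: the set of all A-stable defects. -/
def stableDefectSet (A : Set (List ℕ)) : Set ℝ :=
  {d | ∃ n : ℕ, 0 < n ∧ AStable A n ∧ d = Adefect A n}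

open scoped Classical in
/-- The order type of a well-ordered subset `S` of a linear order
(junk value `0` if `S` is not well-ordered, i.e. not `Set.IsWF`). -/
noncomputable def setOrderType {X : Type*} [LinearOrder X] (S : Set X) : Ordinal :=
  if h : S.IsWF then
    letI : WellFoundedLT S := ⟨h⟩
    Ordinal.type ((· < ·) : S → S → Prop)
  else 0

/-!
Equal defects force `log₂ n - log₂ m = ℓ^A(n) - ℓ^A(m)` to be an integer, so one of `n`, `m` is a
power-of-two multiple `2^k` of the other whose chain length exceeds the other's by exactly `k`.
Stability passes up to `2^k n` directly from the definition; it passes down from `2^k m` to `m`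
because doubling costs at most one step, so the extra `k` steps cannot be saved earlier.
-/

lemma chainLength_two_pow_mul_le {A : Set (List ℕ)} (hA : Admissible A) {m : ℕ} (hm : 0 < m)
    (j : ℕ) : chainLength A (2 ^ j * m) ≤ chainLength A m + j := by
  induction j with
  | zero => simp
  | succ j ih =>
    have hdouble := hA.2 (2 ^ j * m) (by positivity)
    rw [pow_succ', mul_assoc]
    omega

lemma AStable.two_pow_mul {A : Set (List ℕ)} {n : ℕ} (hn : AStable A n) (k : ℕ) :
    AStable A (2 ^ k * n) := by
  intro j
  rw [← mul_assoc, ← pow_add, hn, hn]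
  omega

lemma AStable.of_two_pow_mul {A : Set (List ℕ)} (hA : Admissible A) {m k : ℕ} (hm : 0 < m)
    (hst : AStable A (2 ^ k * m)) (hk : chainLength A (2 ^ k * m) = chainLength A m + k) :
    AStable A m := by
  intro j
  have hup := chainLength_two_pow_mul_le hA hm j
  have hdown := chainLength_two_pow_mul_le hA (by positivity : 0 < 2 ^ j * m) k
  rw [mul_left_comm, hst j] at hdown
  omega

lemma eq_two_pow_mul_of_logb_eq_add {n m k : ℕ} (hn : 0 < n) (hm : 0 < m)
    (h : Real.logb 2 n = Real.logb 2 m + k) : n = 2 ^ k * m := by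
  have hpow : (n : ℝ) = 2 ^ k * m := by
    rw [← Real.rpow_logb two_pos (by norm_num) (by positivity : (0 : ℝ) < n), h,
      Real.rpow_add two_pos, Real.rpow_logb two_pos (by norm_num) (by positivity),
      Real.rpow_natCast, mul_comm]
  exact_mod_cast hpow

lemma eq_two_pow_mul_of_adefect_eq {A : Set (List ℕ)} {n m : ℕ} (hn : 0 < n) (hm : 0 < m)
    (hd : Adefect A n = Adefect A m) (hle : chainLength A m ≤ chainLength A n) :
    n = 2 ^ (chainLength A n - chainLength A m) * m := by
  apply eq_two_pow_mul_of_logb_eq_add hn hm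
  unfold Adefect at hd
  push_cast [hle]
  linarith

/-- If `δ^A(n) = δ^A(m)` and `n` is `A`-stable, then so is `m`. -/
theorem AStable_of_defect_eq
    (A : Set (List ℕ)) (hA : Admissible A) (n m : ℕ) (hn : 0 < n) (hm : 0 < m)
    (hd : Adefect A n = Adefect A m) (hst : AStable A n) :
    AStable A m := by
  rcases le_total (chainLength A m) (chainLength A n) with hle | hle
  · have hnm := eq_two_pow_mul_of_adefect_eq hn hm hd hle
    rw [hnm] at hst
    exact hst.of_two_pow_mul hA hm (by rw [← hnm]; omega)
  · rw [eq_two_pow_mul_of_adefect_eq hm hn hd.symm hle]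
    exact hst.two_pow_mul _
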